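/- arXiv:2409.10004 — 6 statements merged into one kernel-verified Lean document; each statement's English description precedes it below -/
import Mathlib

section
/- Let X be a metric space and σ : X → X a Lipschitz map. Then chain proximality is transitive: for all x, y, z in X, if x ⤳ y and y ⤳ z then x ⤳ z. -/
/-- An `ε`-interception of `y` by `x` for the map `σ`: a finite sequence
`x = x₀, x₁, …, x_m` such that `∑_{i<m} d(x_{i+1}, σ(x_i)) < ε` and `x_m = σ^m(y)`. -/
def Interception {X : Type*} [MetricSpace X] (σ : X → X) (x y : X) (ε : ℝ) : Prop :=
  ∃ (m : ℕ) (c : ℕ → X), c 0 = x ∧ c m = σ^[m] y ∧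
    (∑ i ∈ Finset.range m, dist (c (i + 1)) (σ (c i))) < ε

/-- `x` is chain proximal to `y` (written `x ⤳ y`) if for every `ε > 0` there is an
`ε`-interception of `y` by `x`. -/
def ChainProximal {X : Type*} [MetricSpace X] (σ : X → X) (x y : X) : Prop :=
  ∀ ε : ℝ, 0 < ε → Interception σ x y ε

/-- If `σ : X → X` is Lipschitz, then chain proximality is transitive. -/
theorem chainProximal_trans {X : Type*} [MetricSpace X] (σ : X → X)
    (K : NNReal) (hσ : LipschitzWith K σ) (x y z : X)
    (hxy : ChainProximal σ x y) (hyz : ChainProximal σ y z) :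
    ChainProximal σ x z := by
  intro ε hε
  obtain ⟨m, c, hc0, hcm, hcs⟩ := hxy (ε / 2) (by linarith)
  set Km : ℝ := (K : ℝ) ^ m + 1 with hKmdef
  have hKmpos : 0 < Km := by positivity
  obtain ⟨n, c', hc'0, hc'n, hc's⟩ := hyz (ε / (2 * Km)) (by positivity)
  set d : ℕ → X := fun i => if i ≤ m then c i else σ^[m] (c' (i - m)) with hd
  have hdm : ∀ j : ℕ, d (m + j) = σ^[m] (c' j) := by
    intro j
    cases j with
    | zero =>
      simp only [hd, Nat.add_zero, le_refl, if_pos]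
      rw [hcm, hc'0]
    | succ k =>
      simp only [hd]
      rw [if_neg (by omega), Nat.add_sub_cancel_left]
  refine ⟨m + n, d, ?_, ?_, ?_⟩
  · simp [hd, hc0]
  · rw [hdm n, hc'n, Function.iterate_add_apply]
  · rw [Finset.sum_range_add]
    have h1 : ∑ i ∈ Finset.range m, dist (d (i + 1)) (σ (d i)) < ε / 2 := by
      have : ∀ i ∈ Finset.range m, dist (d (i + 1)) (σ (d i)) =
          dist (c (i + 1)) (σ (c i)) := by
        intro i hi
        rw [Finset.mem_range] at hi
        simp only [hd, if_pos (by omega : i + 1 ≤ m), if_pos (by omega : i ≤ m)]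
      rw [Finset.sum_congr rfl this]
      exact hcs
    have h2 : ∑ i ∈ Finset.range n, dist (d (m + i + 1)) (σ (d (m + i))) < ε / 2 := by
      have hterm : ∀ i ∈ Finset.range n, dist (d (m + i + 1)) (σ (d (m + i))) ≤
          ((K : ℝ) ^ m) * dist (c' (i + 1)) (σ (c' i)) := by
        intro i _
        have e1 : d (m + i + 1) = σ^[m] (c' (i + 1)) := by
          rw [show m + i + 1 = m + (i + 1) by ring, hdm]
        rw [e1, hdm]
        have e2 : σ (σ^[m] (c' i)) = σ^[m] (σ (c' i)) :=
          ((Function.iterate_succ_apply' σ m (c' i)).symm.trans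
            (Function.iterate_succ_apply σ m (c' i)))
        rw [e2]
        have := (hσ.iterate m).dist_le_mul (c' (i + 1)) (σ (c' i))
        simpa [NNReal.coe_pow] using this
      calc ∑ i ∈ Finset.range n, dist (d (m + i + 1)) (σ (d (m + i)))
          ≤ ∑ i ∈ Finset.range n, ((K : ℝ) ^ m) * dist (c' (i + 1)) (σ (c' i)) :=
            Finset.sum_le_sum hterm
        _ = ((K : ℝ) ^ m) * ∑ i ∈ Finset.range n, dist (c' (i + 1)) (σ (c' i)) := by
            rw [Finset.mul_sum]
        _ ≤ Km * ∑ i ∈ Finset.range n, dist (c' (i + 1)) (σ (c' i)) := by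
            apply mul_le_mul_of_nonneg_right (by simp [hKmdef])
            exact Finset.sum_nonneg fun i _ => dist_nonneg
        _ < Km * (ε / (2 * Km)) := by
            exact mul_lt_mul_of_pos_left hc's hKmpos
        _ = ε / 2 := by field_simp
    linarith
end

section
/- Let X be a metric space and σ : X → X a bi-Lipschitz bijection (σ is a bijection and both σ and its inverse are Lipschitz). Then chain proximality is invariant under σ: for all x, y in X, x ⤳ y if and only if σ(x) ⤳ σ(y). -/
/-- If `σ : X → X` is a bi-Lipschitz bijection (both `σ` and its inverse are Lipschitz),
then chain proximality is invariant under `σ`:  `x ⤳ y ↔ σ(x) ⤳ σ(y)`. -/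
theorem chainProximal_invariant {X : Type*} [MetricSpace X] (σ : X ≃ X)
    (K K' : NNReal) (hσ : LipschitzWith K σ) (hσ' : LipschitzWith K' σ.symm)
    (x y : X) :
    ChainProximal σ x y ↔ ChainProximal σ (σ x) (σ y) := by
  constructor
  · intro h ε hε
    have hK : (0:ℝ) < (K : ℝ) + 1 := by positivity
    obtain ⟨m, c, h0, hm, hs⟩ := h (ε / ((K : ℝ) + 1)) (by positivity)
    refine ⟨m, fun i => σ (c i), by simp [h0], ?_, ?_⟩
    · simp only [hm, ← Function.iterate_succ_apply' σ m y, Function.iterate_succ_apply]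
    · have hsum0 : (0:ℝ) ≤ ∑ i ∈ Finset.range m, dist (c (i+1)) (σ (c i)) :=
        Finset.sum_nonneg fun i _ => dist_nonneg
      calc ∑ i ∈ Finset.range m, dist (σ (c (i+1))) (σ (σ (c i)))
          ≤ ∑ i ∈ Finset.range m, (K : ℝ) * dist (c (i+1)) (σ (c i)) :=
            Finset.sum_le_sum fun i _ => hσ.dist_le_mul _ _
        _ = (K : ℝ) * ∑ i ∈ Finset.range m, dist (c (i+1)) (σ (c i)) := by
            rw [Finset.mul_sum]
        _ ≤ ((K : ℝ) + 1) * ∑ i ∈ Finset.range m, dist (c (i+1)) (σ (c i)) := by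
            apply mul_le_mul_of_nonneg_right _ hsum0
            linarith
        _ < ((K : ℝ) + 1) * (ε / ((K : ℝ) + 1)) := by
            exact mul_lt_mul_of_pos_left hs hK
        _ = ε := by field_simp
  · intro h ε hε
    have hK : (0:ℝ) < (K' : ℝ) + 1 := by positivity
    obtain ⟨m, c, h0, hm, hs⟩ := h (ε / ((K' : ℝ) + 1)) (by positivity)
    refine ⟨m, fun i => σ.symm (c i), by simp [h0], ?_, ?_⟩
    · show σ.symm (c m) = (⇑σ)^[m] y
      rw [hm, ← Function.iterate_succ_apply σ m y, Function.iterate_succ_apply']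
      simp
    · have hsum0 : (0:ℝ) ≤ ∑ i ∈ Finset.range m, dist (c (i+1)) (σ (c i)) :=
        Finset.sum_nonneg fun i _ => dist_nonneg
      calc ∑ i ∈ Finset.range m, dist (σ.symm (c (i+1))) (σ (σ.symm (c i)))
          = ∑ i ∈ Finset.range m, dist (σ.symm (c (i+1))) (σ.symm (σ (c i))) := by
            simp
        _ ≤ ∑ i ∈ Finset.range m, (K' : ℝ) * dist (c (i+1)) (σ (c i)) :=
            Finset.sum_le_sum fun i _ => hσ'.dist_le_mul _ _
        _ = (K' : ℝ) * ∑ i ∈ Finset.range m, dist (c (i+1)) (σ (c i)) := by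
            rw [Finset.mul_sum]
        _ ≤ ((K' : ℝ) + 1) * ∑ i ∈ Finset.range m, dist (c (i+1)) (σ (c i)) := by
            apply mul_le_mul_of_nonneg_right _ hsum0
            linarith
        _ < ((K' : ℝ) + 1) * (ε / ((K' : ℝ) + 1)) := by
            exact mul_lt_mul_of_pos_left hs hK
        _ = ε := by field_simp
end

section
/- Let X be a compact metric space, σ : X → X a homeomorphism, and ν a σ-invariant Borel probability measure on X with full support (every nonempty open subset of X has positive ν-measure). Then for every x ∈ X and every δ > 0, the set {z ∈ X : liminf as n → ∞ of d(σⁿ(x), σⁿ(z)) < δ} has positive ν-measure. (Lemma 5.6 of the paper, on δ-proximal pairs.) -/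
open MeasureTheory Filter

/-- **Lemma 5.6 (δ-proximal pairs).**
Let `X` be a compact metric space, `σ : X → X` a homeomorphism, and `ν` a `σ`-invariant
Borel probability measure on `X` with full support.  Then for every `x ∈ X` and every
`δ > 0`, the set `{z : liminf_n d(σⁿ x, σⁿ z) < δ}` has positive `ν`-measure. -/
theorem delta_proximal_positive_measure {X : Type*} [MetricSpace X] [CompactSpace X]
    [MeasurableSpace X] [BorelSpace X] (σ : X ≃ₜ X)
    (ν : Measure X) [IsProbabilityMeasure ν]
    (hinv : Measure.map σ ν = ν)
    (hfull : ∀ U : Set X, IsOpen U → U.Nonempty → 0 < ν U)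
    (x : X) (δ : ℝ) (hδ : 0 < δ) :
    0 < ν {z : X |
      liminf (fun n : ℕ => dist ((⇑σ)^[n] x) ((⇑σ)^[n] z)) atTop < δ} := by
  -- continuity and measurability of iterates
  have hcont : ∀ n : ℕ, Continuous ((⇑σ)^[n]) := fun n => σ.continuous.iterate n
  have hmeas : ∀ n : ℕ, Measurable ((⇑σ)^[n]) := fun n => (hcont n).measurable
  -- invariance of ν under iterates
  have hinvn : ∀ n : ℕ, Measure.map ((⇑σ)^[n]) ν = ν := by
    intro n
    induction n with
    | zero => simp
    | succ n ih =>
      rw [Function.iterate_succ']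
      rw [← Measure.map_map σ.continuous.measurable (hmeas n), ih, hinv]
  -- convergent subsequence of the orbit of x
  obtain ⟨y, φ, hφ, hlim⟩ := CompactSpace.tendsto_subseq (fun n => (⇑σ)^[n] x)
  -- the sets A k
  set A : ℕ → Set X := fun k => ((⇑σ)^[φ k]) ⁻¹' (Metric.ball y (δ / 3)) with hA
  have hAmeas : ∀ k, MeasurableSet (A k) := fun k =>
    (hmeas (φ k)) Metric.isOpen_ball.measurableSet
  have hc : 0 < ν (Metric.ball y (δ / 3)) :=
    hfull _ Metric.isOpen_ball ⟨y, Metric.mem_ball_self (by linarith)⟩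
  have hAc : ∀ k, ν (A k) = ν (Metric.ball y (δ / 3)) := by
    intro k
    rw [hA]
    rw [← hinvn (φ k), Measure.map_apply (hmeas (φ k)) Metric.isOpen_ball.measurableSet]
    rw [hinvn (φ k)]
  -- measure of limsup A is at least c
  have hlimsup : ν (Metric.ball y (δ / 3)) ≤ ν (limsup A atTop) := by
    rw [limsup_eq_iInf_iSup_of_nat]
    simp only [Set.iInf_eq_iInter, Set.iSup_eq_iUnion]
    have hB : ∀ k : ℕ, MeasurableSet (⋃ j, ⋃ _ : j ≥ k, A j) := fun k =>
      MeasurableSet.iUnion fun j => MeasurableSet.iUnion fun _ => hAmeas j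
    have hanti : Antitone (fun k : ℕ => ⋃ j, ⋃ _ : j ≥ k, A j) := by
      intro i j hij
      refine Set.iUnion₂_subset fun l hl => ?_
      exact Set.subset_iUnion₂ (s := fun j' (_ : j' ≥ i) => A j') l (le_trans hij hl)
    rw [hanti.measure_iInter (fun k => (hB k).nullMeasurableSet) ⟨0, measure_ne_top ν _⟩]
    refine le_iInf fun k => ?_
    calc ν (Metric.ball y (δ / 3)) = ν (A k) := (hAc k).symm
      _ ≤ ν (⋃ j, ⋃ _ : j ≥ k, A j) :=
        measure_mono (Set.subset_iUnion₂ (s := fun j (_ : j ≥ k) => A j) k le_rfl)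
  -- limsup A is contained in the target set
  have hsub : limsup A atTop ⊆
      {z : X | liminf (fun n : ℕ => dist ((⇑σ)^[n] x) ((⇑σ)^[n] z)) atTop < δ} := by
    intro z hz
    rw [Set.mem_setOf_eq]
    have hzfreq : ∃ᶠ k in atTop, (⇑σ)^[φ k] z ∈ Metric.ball y (δ / 3) := by
      have := (Filter.mem_limsup_iff_frequently_mem (s := A) (a := z)).mp hz
      exact this
    -- eventually σ^[φ k] x ∈ ball y (δ/3)
    have hxev : ∀ᶠ k in atTop, (⇑σ)^[φ k] x ∈ Metric.ball y (δ / 3) :=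
      hlim (Metric.ball_mem_nhds y (by linarith))
    have hfreq : ∃ᶠ k in atTop,
        dist ((⇑σ)^[φ k] x) ((⇑σ)^[φ k] z) ≤ 2 * δ / 3 := by
      refine (hzfreq.and_eventually hxev).mono ?_
      rintro k ⟨h1, h2⟩
      have := dist_triangle ((⇑σ)^[φ k] x) y ((⇑σ)^[φ k] z)
      rw [Metric.mem_ball] at h1 h2
      rw [dist_comm] at h1
      linarith
    have hfreqn : ∃ᶠ n in atTop,
        dist ((⇑σ)^[n] x) ((⇑σ)^[n] z) ≤ 2 * δ / 3 := by
      exact hφ.tendsto_atTop.frequently hfreq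
    calc liminf (fun n : ℕ => dist ((⇑σ)^[n] x) ((⇑σ)^[n] z)) atTop ≤ 2 * δ / 3 := by
          refine liminf_le_of_frequently_le hfreqn ?_
          exact isBoundedUnder_of ⟨0, fun n => dist_nonneg⟩
      _ < δ := by linarith
  calc (0 : ENNReal) < ν (Metric.ball y (δ / 3)) := hc
    _ ≤ ν (limsup A atTop) := hlimsup
    _ ≤ ν _ := measure_mono hsub
end

section
/- Let X be a compact metric space and φ a continuous flow on X. For every x ∈ X, the set Λ₊(x) is invariant under the flow: if y ∈ Λ₊(x) then φ(t, y) ∈ Λ₊(x) for every t ∈ ℝ. (Claim (2) in the proof of Theorem A.) -/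
/-- A `(b, ε)`-chain from `x` to `y` for the flow `φ`: points `p₀ = x, p₁, …, p_k`
and times `t₀, …, t_k`, each `t_i ≥ b`, with `d(φ(t_i, p_i), p_{i+1}) < ε` for `i < k`
and `φ(t_k, p_k) = y`. -/
def FlowChain {X : Type*} [MetricSpace X] (φ : ℝ × X → X) (b ε : ℝ) (x y : X) : Prop :=
  ∃ (k : ℕ) (p : ℕ → X) (t : ℕ → ℝ), p 0 = x ∧ (∀ i ≤ k, b ≤ t i) ∧
    (∀ i < k, dist (φ (t i, p i)) (p (i + 1)) < ε) ∧ φ (t k, p k) = y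

/-- The orbit of `x` under the flow `φ`. -/
def FlowOrbit {X : Type*} (φ : ℝ × X → X) (x : X) : Set X :=
  {y | ∃ s : ℝ, y = φ (s, x)}

/-- `x` is chain recurrent for `φ` if there exists `b > 0` such that for every `ε > 0`
there is a `(b, ε)`-chain from `x` to `x`. -/
def FlowChainRecurrent {X : Type*} [MetricSpace X] (φ : ℝ × X → X) (x : X) : Prop :=
  ∃ b > (0 : ℝ), ∀ ε > (0 : ℝ), FlowChain φ b ε x x

/-- `Λ₊(x)`: points `y` not on the orbit of `x` for which there exists `b > 0` such
that for every `ε > 0` there is a `(b, ε)`-chain from `x` to `y`. -/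
def LambdaPlus {X : Type*} [MetricSpace X] (φ : ℝ × X → X) (x : X) : Set X :=
  {y | y ∉ FlowOrbit φ x ∧ ∃ b > (0 : ℝ), ∀ ε > (0 : ℝ), FlowChain φ b ε x y}

/-- `Λ₋(x)`: points `y` not on the orbit of `x` for which there exists `b > 0` such
that for every `ε > 0` there is a `(b, ε)`-chain from `y` to `x`. -/
def LambdaMinus {X : Type*} [MetricSpace X] (φ : ℝ × X → X) (x : X) : Set X :=
  {y | y ∉ FlowOrbit φ x ∧ ∃ b > (0 : ℝ), ∀ ε > (0 : ℝ), FlowChain φ b ε y x}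

/-- Uniform continuity of the flow over a compact time interval. -/
lemma flow_uc {X : Type*} [MetricSpace X] [CompactSpace X]
    (φ : ℝ × X → X) (hcont : Continuous φ) (c d : ℝ) {η : ℝ} (hη : 0 < η) :
    ∃ δ > 0, ∀ a b : X, dist a b < δ → ∀ s ∈ Set.Icc c d, dist (φ (s, a)) (φ (s, b)) < η := by
  haveI : CompactSpace (Set.Icc c d) := isCompact_iff_compactSpace.mp isCompact_Icc
  have hF : Continuous (fun z : Set.Icc c d × X => φ (z.1.1, z.2)) :=
    hcont.comp ((continuous_subtype_val.comp continuous_fst).prodMk continuous_snd)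
  have hUF : UniformContinuous (fun z : Set.Icc c d × X => φ (z.1.1, z.2)) :=
    CompactSpace.uniformContinuous_of_continuous hF
  rw [Metric.uniformContinuous_iff] at hUF
  obtain ⟨δ, hδ, h⟩ := hUF η hη
  refine ⟨δ, hδ, fun a b hab s hs => ?_⟩
  have hd : dist ((⟨s, hs⟩ : Set.Icc c d), a) ((⟨s, hs⟩ : Set.Icc c d), b) < δ := by
    rw [Prod.dist_eq]
    simp only [Subtype.dist_eq, dist_self]
    exact max_lt hδ hab
  exact h hd

/-- Monotonicity of chains in the jump tolerance. -/
lemma flowChain_mono {X : Type*} [MetricSpace X] (φ : ℝ × X → X) {b ε₁ ε₂ : ℝ} {x z : X}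
    (h : FlowChain φ b ε₁ x z) (hle : ε₁ ≤ ε₂) : FlowChain φ b ε₂ x z := by
  obtain ⟨k, p, τ, h1, h2, h3, h4⟩ := h
  exact ⟨k, p, τ, h1, h2, fun i hi => lt_of_lt_of_le (h3 i hi) hle, h4⟩

/-- **Claim (2) in the proof of Theorem A.**
For a continuous flow `φ` on a compact metric space `X` and every `x ∈ X`, the set
`Λ₊(x)` is invariant under the flow: if `y ∈ Λ₊(x)` then `φ(t, y) ∈ Λ₊(x)` for all `t`. -/
theorem lambdaPlus_flow_invariant {X : Type*} [MetricSpace X] [CompactSpace X]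
    (φ : ℝ × X → X) (hcont : Continuous φ)
    (h0 : ∀ p : X, φ (0, p) = p)
    (hadd : ∀ s t : ℝ, ∀ p : X, φ (s, φ (t, p)) = φ (s + t, p))
    (x : X) (y : X) (hy : y ∈ LambdaPlus φ x) (t : ℝ) :
    φ (t, y) ∈ LambdaPlus φ x := by
  classical
  obtain ⟨hyorb, b, hb, hchain⟩ := hy
  -- the translated point is not on the orbit of x
  have horb : φ (t, y) ∉ FlowOrbit φ x := by
    rintro ⟨s, hs⟩
    refine hyorb ⟨-t + s, ?_⟩
    have h1 : φ (-t, φ (t, y)) = y := by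
      rw [hadd, neg_add_cancel, h0]
    rw [hs, hadd] at h1
    exact h1.symm
  -- the auxiliary point q, one unit of time b before φ(t,y)
  set q : X := φ (t - b, y) with hq
  have hqY : φ (b, q) = φ (t, y) := by
    rw [hq, hadd, show b + (t - b) = t by ring]
  have hqorb : q ∉ FlowOrbit φ x := by
    rintro ⟨s, hs⟩
    refine horb ⟨b + s, ?_⟩
    rw [← hqY, hs, hadd]
  -- the compact piece of the orbit of x
  set K : Set X := (fun s : ℝ => φ (s, x)) '' Set.Icc t b with hK
  have hKc : IsCompact K :=
    isCompact_Icc.image (hcont.comp (continuous_id.prodMk continuous_const))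
  have hqK : q ∉ K := by
    rintro ⟨s, _, hs⟩
    exact hqorb ⟨s, hs.symm⟩
  obtain ⟨ρ, hρ, hball⟩ : ∃ ρ > 0, Metric.ball q ρ ⊆ Kᶜ :=
    Metric.isOpen_iff.mp hKc.isClosed.isOpen_compl q hqK
  -- choose N with N*b ≥ b - t
  obtain ⟨N, hN⟩ := exists_nat_ge ((b - t) / b)
  have hNb : b - t ≤ N * b := by
    rw [div_le_iff₀ hb] at hN
    linarith
  -- main dichotomy for each ε
  have key : ∀ ε > 0, FlowChain φ b ε x (φ (t, y)) ∨
      ∃ s ∈ Set.Icc t b, dist (φ (s, x)) q < ε := by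
    intro ε hε
    set η : ℝ := ε / (N + 1) with hηdef
    have hη : 0 < η := by positivity
    have hηε : (N : ℝ) * η < ε := by
      have h1 : (N : ℝ) * η < ((N : ℝ) + 1) * η := by
        have : (N : ℝ) < (N : ℝ) + 1 := by linarith
        exact mul_lt_mul_of_pos_right this hη
      have h2 : ((N : ℝ) + 1) * η = ε := by
        rw [hηdef]
        field_simp
      linarith
    have hηε' : η ≤ ε := by
      rw [hηdef]
      exact div_le_self hε.le (by linarith [Nat.cast_nonneg (α := ℝ) N])
    obtain ⟨δ, hδ, hmod⟩ := flow_uc φ hcont t b hη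
    obtain ⟨k, p, τ, hp0, hτb, hjump, hlast⟩ := hchain (min δ η) (lt_min hδ hη)
    -- the accumulated backward times
    set σ : ℕ → ℝ := fun i => (t - b) + ∑ l ∈ Finset.Ico i (k + 1), τ l with hσdef
    have hσrec : ∀ j < k, σ j = τ j + σ (j + 1) := by
      intro j hj
      have : ∑ l ∈ Finset.Ico j (k + 1), τ l
          = τ j + ∑ l ∈ Finset.Ico (j + 1) (k + 1), τ l :=
        Finset.sum_eq_sum_Ico_succ_bot (by omega) τ
      simp only [hσdef]
      rw [this]; ring
    have hσk : σ k = (t - b) + τ k := by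
      simp only [hσdef]
      rw [show Finset.Ico k (k + 1) = {k} by rw [Finset.Ico_add_one_right_eq_Icc, Finset.Icc_self]]
      rw [Finset.sum_singleton]
    have hσq : φ (σ k, p k) = q := by
      rw [hσk, show (t - b) + τ k = (t - b) + τ k from rfl, ← hadd, hlast]
    have hσge : ∀ i ≤ k, t ≤ σ i := by
      intro i hi
      have hk : k ∈ Finset.Ico i (k + 1) := Finset.mem_Ico.mpr ⟨hi, by omega⟩
      have h1 : τ k ≤ ∑ l ∈ Finset.Ico i (k + 1), τ l := by
        refine Finset.single_le_sum (fun l hl => ?_) hk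
        have : l ≤ k := by have := Finset.mem_Ico.mp hl; omega
        exact le_trans hb.le (hτb l this)
      have h2 : b ≤ τ k := hτb k le_rfl
      simp only [hσdef]
      linarith
    have hσgrow : ∀ m ≤ k, t + m * b ≤ σ (k - m) := by
      intro m hm
      have hcard : (Finset.Ico (k - m) (k + 1)).card = m + 1 := by
        rw [Nat.card_Ico]; omega
      have h1 : ((m : ℝ) + 1) * b ≤ ∑ l ∈ Finset.Ico (k - m) (k + 1), τ l := by
        have := Finset.card_nsmul_le_sum (Finset.Ico (k - m) (k + 1)) τ b
          (fun l hl => hτb l (by have := Finset.mem_Ico.mp hl; omega))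
        rw [hcard] at this
        rw [show ((m : ℝ) + 1) * b = (m + 1 : ℕ) • b by push_cast [nsmul_eq_mul]; ring]
        exact this
      simp only [hσdef]
      nlinarith
    -- backward error accumulation
    have claim : ∀ m, m ≤ k → (∀ l, l < m → σ (k - l) < b) →
        dist (φ (σ (k - m), p (k - m))) q ≤ m * η := by
      intro m
      induction m with
      | zero =>
        intro _ _
        simp only [Nat.sub_zero, hσq, dist_self, Nat.cast_zero, zero_mul, le_refl]
      | succ m ih =>
        intro hm1 hH
        have hmk : m ≤ k := by omega
        have hj : k - (m + 1) < k := by omega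
        have hi1 : k - (m + 1) + 1 = k - m := by omega
        have hsb : σ (k - m) < b := hH m (by omega)
        have hst : t ≤ σ (k - m) := hσge (k - m) (by omega)
        have step : dist (φ (σ (k - (m + 1)), p (k - (m + 1)))) (φ (σ (k - m), p (k - m))) < η := by
          have h1 : φ (σ (k - (m + 1)), p (k - (m + 1)))
              = φ (σ (k - m), φ (τ (k - (m + 1)), p (k - (m + 1)))) := by
            rw [hadd, hσrec (k - (m + 1)) hj, hi1, add_comm]
          rw [h1]
          have hjm : dist (φ (τ (k - (m + 1)), p (k - (m + 1)))) (p (k - m)) < δ := by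
            have := hjump (k - (m + 1)) hj
            rw [hi1] at this
            exact lt_of_lt_of_le this (min_le_left _ _)
          exact hmod _ _ hjm (σ (k - m)) ⟨hst, hsb.le⟩
        have ihm : dist (φ (σ (k - m), p (k - m))) q ≤ m * η :=
          ih hmk (fun l hl => hH l (by omega))
        calc dist (φ (σ (k - (m + 1)), p (k - (m + 1)))) q
            ≤ dist (φ (σ (k - (m + 1)), p (k - (m + 1)))) (φ (σ (k - m), p (k - m)))
              + dist (φ (σ (k - m), p (k - m))) q := dist_triangle _ _ _
          _ ≤ η + m * η := by linarith
          _ = (m + 1 : ℕ) * η := by push_cast; ring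
    by_cases hA : ∃ m, m ≤ k ∧ b ≤ σ (k - m)
    · -- we can stop inside the chain: produce a genuine chain to φ(t,y)
      left
      set m₀ := Nat.find hA with hm₀
      obtain ⟨hm₀k, hm₀b⟩ := Nat.find_spec hA
      have hmin : ∀ l, l < m₀ → σ (k - l) < b := by
        intro l hl
        have := Nat.find_min hA hl
        push_neg at this
        exact this (by omega)
      have hm₀N : m₀ ≤ N := by
        by_contra hc
        push_neg at hc
        have h1 : m₀ - 1 < m₀ := by omega
        have h2 : σ (k - (m₀ - 1)) < b := hmin _ h1
        have h3 : t + ((m₀ - 1 : ℕ) : ℝ) * b ≤ σ (k - (m₀ - 1)) := hσgrow _ (by omega)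
        have h4 : (N : ℝ) ≤ ((m₀ - 1 : ℕ) : ℝ) := by
          exact_mod_cast Nat.le_sub_one_of_lt hc
        nlinarith
      have hdq : dist (φ (σ (k - m₀), p (k - m₀))) q < ε := by
        have h1 := claim m₀ hm₀k hmin
        have h2 : (m₀ : ℝ) * η ≤ (N : ℝ) * η := by
          have : (m₀ : ℝ) ≤ (N : ℝ) := by exact_mod_cast hm₀N
          nlinarith
        linarith
      -- build the chain of length (k - m₀) + 1 ending at q, then flow exactly to φ(t,y)
      set i₀ := k - m₀ with hi₀
      set P : ℕ → X := fun j => if j ≤ i₀ then p j else q with hPdef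
      set T : ℕ → ℝ := fun j => if j < i₀ then τ j else if j = i₀ then σ i₀ else b with hTdef
      have hP1 : ∀ j, j ≤ i₀ → P j = p j := fun j hj => if_pos hj
      have hP2 : ∀ j, ¬(j ≤ i₀) → P j = q := fun j hj => if_neg hj
      have hT1 : ∀ j, j < i₀ → T j = τ j := fun j hj => if_pos hj
      have hT2 : T i₀ = σ i₀ := by
        show (if i₀ < i₀ then τ i₀ else if i₀ = i₀ then σ i₀ else b) = σ i₀
        rw [if_neg (lt_irrefl i₀), if_pos rfl]
      have hT3 : T (i₀ + 1) = b := by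
        show (if i₀ + 1 < i₀ then τ (i₀ + 1) else if i₀ + 1 = i₀ then σ i₀ else b) = b
        rw [if_neg (show ¬ i₀ + 1 < i₀ by omega), if_neg (show i₀ + 1 ≠ i₀ by omega)]
      refine ⟨i₀ + 1, P, T, ?_, ?_, ?_, ?_⟩
      · rw [hP1 0 (Nat.zero_le _), hp0]
      · intro j hjle
        by_cases h1 : j < i₀
        · rw [hT1 j h1]
          exact hτb j (by omega)
        · by_cases h2 : j = i₀
          · rw [h2, hT2]
            exact hm₀b
          · rw [show j = i₀ + 1 by omega, hT3]
      · intro j hjlt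
        by_cases h1 : j < i₀
        · rw [hT1 j h1, hP1 j (by omega), hP1 (j + 1) (by omega)]
          have := hjump j (by omega)
          calc dist (φ (τ j, p j)) (p (j + 1)) < min δ η := this
            _ ≤ η := min_le_right _ _
            _ ≤ ε := hηε'
        · have h2 : j = i₀ := by omega
          rw [h2, hT2, hP1 i₀ le_rfl, hP2 (i₀ + 1) (by omega)]
          exact hdq
      · rw [hT3, hP2 (i₀ + 1) (by omega)]
        exact hqY
    · -- the whole chain gets consumed: q is ε-close to the compact orbit piece
      right
      push_neg at hA
      have hkN : k < N := by
        by_contra hc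
        push_neg at hc
        have h1 : σ (k - N) < b := hA N hc
        have h2 : t + (N : ℝ) * b ≤ σ (k - N) := hσgrow N hc
        linarith
      have hH : ∀ l, l < k → σ (k - l) < b := fun l hl => hA l (by omega)
      have h1 := claim k le_rfl hH
      rw [Nat.sub_self, hp0] at h1
      have hσ0b : σ 0 < b := by
        have := hA k le_rfl
        rwa [Nat.sub_self] at this
      have hσ0t : t ≤ σ 0 := hσge 0 (Nat.zero_le _)
      refine ⟨σ 0, ⟨hσ0t, hσ0b.le⟩, ?_⟩
      have h2 : (k : ℝ) * η < ε := by
        have hkr : (k : ℝ) ≤ (N : ℝ) := by exact_mod_cast hkN.le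
        nlinarith
      linarith
  -- assemble: membership in Λ₊
  refine ⟨horb, b, hb, fun ε hε => ?_⟩
  have hε' : 0 < min ε ρ := lt_min hε hρ
  rcases key (min ε ρ) hε' with hch | ⟨s, hs, hd⟩
  · exact flowChain_mono φ hch (min_le_left _ _)
  · exfalso
    have hmem : φ (s, x) ∈ K := ⟨s, hs, rfl⟩
    have : φ (s, x) ∈ Metric.ball q ρ := by
      rw [Metric.mem_ball]
      exact lt_of_lt_of_le hd (min_le_right _ _)
    exact hball this hmem
end

section
/- Let X be a compact metric space and φ a continuous flow on X, and let x ∈ X be a point that is not chain recurrent for φ. Then Λ₊(x) is a closed subset of X. (Claim (3) in the proof of Theorem A.) -/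
section FlowChainAux

open Finset

set_option linter.unusedSectionVars false

variable {X : Type*} [MetricSpace X] [CompactSpace X] (φ : ℝ × X → X)

lemma uc_fixed (hcont : Continuous φ) (c : ℝ) {δ : ℝ} (hδ : 0 < δ) :
    ∃ ε > 0, ∀ p q : X, dist p q < ε → dist (φ (c, p)) (φ (c, q)) < δ := by
  have hg : Continuous (fun p : X => φ (c, p)) :=
    hcont.comp (continuous_const.prodMk continuous_id)
  have hu : UniformContinuous (fun p : X => φ (c, p)) :=
    CompactSpace.uniformContinuous_of_continuous hg
  obtain ⟨ε, hε, h⟩ := Metric.uniformContinuous_iff.mp hu δ hδ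
  exact ⟨ε, hε, fun p q hpq => h hpq⟩

/-- Uniform continuity over a compact time interval. -/

lemma uc_interval (hcont : Continuous φ) (C : ℝ) {δ : ℝ} (hδ : 0 < δ) :
    ∃ ε > 0, ∀ s : ℝ, 0 ≤ s → s ≤ C → ∀ p q : X, dist p q < ε →
      dist (φ (s, p)) (φ (s, q)) < δ := by
  haveI : CompactSpace (Set.Icc (0:ℝ) C) := isCompact_iff_compactSpace.mp isCompact_Icc
  set g : Set.Icc (0:ℝ) C × X → X := fun z => φ (z.1.1, z.2) with hg
  have hgc : Continuous g :=
    hcont.comp ((continuous_subtype_val.comp continuous_fst).prodMk continuous_snd)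
  have hu : UniformContinuous g := CompactSpace.uniformContinuous_of_continuous hgc
  obtain ⟨ε, hε, h⟩ := Metric.uniformContinuous_iff.mp hu δ hδ
  refine ⟨ε, hε, fun s hs0 hsC p q hpq => ?_⟩
  have := h (a := (⟨s, hs0, hsC⟩, p)) (b := (⟨s, hs0, hsC⟩, q)) ?_
  · exact this
  · simpa [Prod.dist_eq, Subtype.dist_eq, dist_nonneg] using hpq

lemma chain_error (hcont : Continuous φ)
    (hadd : ∀ s t : ℝ, ∀ p : X, φ (s, φ (t, p)) = φ (s + t, p))
    (C : ℝ) (n : ℕ) {δ : ℝ} (hδ : 0 < δ) :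
    ∃ ε > 0, ∀ m ≤ n, ∀ (p : ℕ → X) (t : ℕ → ℝ),
      (∀ i ≤ m, 0 ≤ t i) → (∑ i ∈ Finset.range (m+1), t i) ≤ C →
      (∀ i < m, dist (φ (t i, p i)) (p (i+1)) < ε) →
      dist (φ (t m, p m)) (φ (∑ i ∈ Finset.range (m+1), t i, p 0)) < δ := by
  induction n generalizing δ with
  | zero =>
    refine ⟨δ, hδ, fun m hm p t _ _ _ => ?_⟩
    interval_cases m
    simp [Finset.sum_range_one, hδ]
  | succ n IH =>
    obtain ⟨ε₁, hε₁, h₁⟩ := uc_interval φ hcont C hδ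
    obtain ⟨εa, hεa, ha⟩ := IH hδ
    obtain ⟨εb, hεb, hb⟩ := IH (δ := ε₁/2) (by linarith)
    refine ⟨min εa (min εb (ε₁/2)), by positivity, fun m hm p t ht hsum hj => ?_⟩
    rcases Nat.lt_or_ge m (n+1) with hmn | hmn
    · exact ha m (by omega) p t ht hsum
        (fun i hi => lt_of_lt_of_le (hj i hi) (min_le_left _ _))
    · have hmeq : m = n + 1 := le_antisymm hm hmn
      subst hmeq
      have hsum' : (∑ i ∈ Finset.range (n+1+1), t i)
          = (∑ i ∈ Finset.range (n+1), t i) + t (n+1) := Finset.sum_range_succ t (n+1)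
      have htlast : 0 ≤ t (n+1) := ht (n+1) le_rfl
      have hS'le : (∑ i ∈ Finset.range (n+1), t i) ≤ C := by
        have := hsum
        rw [hsum'] at this; linarith
      have hpre : dist (φ (t n, p n)) (φ (∑ i ∈ Finset.range (n+1), t i, p 0)) < ε₁/2 :=
        hb n le_rfl p t (fun i hi => ht i (by omega)) hS'le
          (fun i hi => lt_of_lt_of_le (hj i (by omega))
            (le_trans (min_le_right _ _) (min_le_left _ _)))
      have hjump : dist (φ (t n, p n)) (p (n+1)) < ε₁/2 :=
        lt_of_lt_of_le (hj n (by omega))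
          (le_trans (min_le_right _ _) (min_le_right _ _))
      have hclose : dist (p (n+1)) (φ (∑ i ∈ Finset.range (n+1), t i, p 0)) < ε₁ := by
        have := dist_triangle (p (n+1)) (φ (t n, p n))
          (φ (∑ i ∈ Finset.range (n+1), t i, p 0))
        rw [dist_comm (p (n+1)) (φ (t n, p n))] at this
        linarith
      have htC : t (n+1) ≤ C := by
        have h1 : t (n+1) ≤ ∑ i ∈ Finset.range (n+1+1), t i :=
          Finset.single_le_sum (f := t) (fun i hi => ht i (by
            simp only [Finset.mem_range] at hi; omega))
            (by simp)
        linarith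
      have := h₁ (t (n+1)) htlast htC _ _ hclose
      rw [hadd] at this
      have harith : t (n+1) + ∑ i ∈ Finset.range (n+1), t i
          = ∑ i ∈ Finset.range (n+1+1), t i := by rw [hsum']; ring
      rwa [harith] at this

lemma chain_concat {ε : ℝ} (Q : ℝ → Prop) (k₁ k₂ : ℕ) (p₁ p₂ : ℕ → X) (t₁ t₂ : ℕ → ℝ)
    (hq₁ : ∀ i ≤ k₁, Q (t₁ i)) (hq₂ : ∀ i ≤ k₂, Q (t₂ i))
    (hj₁ : ∀ i < k₁, dist (φ (t₁ i, p₁ i)) (p₁ (i+1)) < ε)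
    (hj₂ : ∀ i < k₂, dist (φ (t₂ i, p₂ i)) (p₂ (i+1)) < ε)
    (hmid : dist (φ (t₁ k₁, p₁ k₁)) (p₂ 0) < ε) :
    ∃ (p : ℕ → X) (t : ℕ → ℝ), p 0 = p₁ 0 ∧ (∀ i ≤ k₁+1+k₂, Q (t i)) ∧
      (∀ i < k₁+1+k₂, dist (φ (t i, p i)) (p (i+1)) < ε) ∧
      t (k₁+1+k₂) = t₂ k₂ ∧ p (k₁+1+k₂) = p₂ k₂ := by
  refine ⟨fun i => if i ≤ k₁ then p₁ i else p₂ (i - (k₁+1)),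
          fun i => if i ≤ k₁ then t₁ i else t₂ (i - (k₁+1)), ?_, ?_, ?_, ?_, ?_⟩
  · simp
  · intro i hi
    by_cases h : i ≤ k₁
    · simpa [h] using hq₁ i h
    · simp only [h, if_false]
      exact hq₂ _ (by omega)
  · intro i hi
    rcases lt_trichotomy i k₁ with h | h | h
    · have h1 : i ≤ k₁ := h.le
      have h2 : i + 1 ≤ k₁ := h
      simpa [h1, h2] using hj₁ i h
    · subst h
      have h2 : ¬ (i + 1 ≤ i) := by omega
      simpa [h2] using hmid
    · have h1 : ¬ (i ≤ k₁) := by omega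
      have h2 : ¬ (i + 1 ≤ k₁) := by omega
      have h3 : i + 1 - (k₁+1) = i - (k₁+1) + 1 := by omega
      simp only [h1, h2, if_false, h3]
      exact hj₂ _ (by omega)
  · have : ¬ (k₁+1+k₂ ≤ k₁) := by omega
    simp [this]
  · have : ¬ (k₁+1+k₂ ≤ k₁) := by omega
    simp [this]

/-- A chain along an exact orbit with all times in `[b, 2b]`. -/

lemma orbit_chain (h0 : ∀ p : X, φ (0, p) = p)
    (hadd : ∀ s t : ℝ, ∀ p : X, φ (s, φ (t, p)) = φ (s + t, p))
    {b : ℝ} (hb : 0 < b) (q : X) {τ : ℝ} (hτ : b ≤ τ) :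
    ∃ (k : ℕ) (p : ℕ → X) (t : ℕ → ℝ), p 0 = q ∧ (∀ i ≤ k, b ≤ t i ∧ t i ≤ 2*b) ∧
      (∀ i < k, φ (t i, p i) = p (i+1)) ∧ φ (t k, p k) = φ (τ, q) := by
  set m : ℕ := ⌊τ / b⌋₊ with hm
  have hτ0 : 0 < τ := lt_of_lt_of_le hb hτ
  have hm1 : 1 ≤ m := Nat.le_floor (by rw [Nat.cast_one, le_div_iff₀ hb]; linarith)
  have hm0 : (0:ℝ) < (m:ℝ) := by exact_mod_cast Nat.lt_of_lt_of_le Nat.zero_lt_one hm1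
  set u : ℝ := τ / m with hu
  have hbu : b ≤ u := by
    rw [hu, le_div_iff₀ hm0]
    have := Nat.floor_le (a := τ / b) (by positivity)
    rw [← hm] at this
    calc b * (m:ℝ) ≤ b * (τ / b) := by nlinarith
    _ = τ := by field_simp
  have hu2b : u ≤ 2*b := by
    rw [hu, div_le_iff₀ hm0]
    have h2 : τ / b < (m:ℝ) + 1 := by rw [hm]; exact Nat.lt_floor_add_one _
    have h3 : τ < ((m:ℝ) + 1) * b := by rw [div_lt_iff₀ hb] at h2; linarith
    have h4 : (m:ℝ) + 1 ≤ 2 * m := by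
      have : (1:ℝ) ≤ (m:ℝ) := by exact_mod_cast hm1
      linarith
    nlinarith
  refine ⟨m - 1, fun i => φ ((i:ℝ) * u, q), fun _ => u, ?_, ?_, ?_, ?_⟩
  · simp [h0]
  · intro i _; exact ⟨hbu, hu2b⟩
  · intro i _
    rw [hadd]
    congr 1
    push_cast
    ring
  · rw [hadd]
    congr 1
    have : ((m - 1 : ℕ) : ℝ) = (m:ℝ) - 1 := by
      rw [Nat.cast_sub hm1]; simp
    rw [this]
    have : u + ((m:ℝ) - 1) * u = (m:ℝ) * u := by ring
    rw [this, hu, mul_div_cancel₀ _ (ne_of_gt hm0)]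

/-- Any `(b,ε)`-chain can be refined so all times lie in `[b, 2b]`. -/

lemma chain_split (h0 : ∀ p : X, φ (0, p) = p)
    (hadd : ∀ s t : ℝ, ∀ p : X, φ (s, φ (t, p)) = φ (s + t, p))
    {b ε : ℝ} (hb : 0 < b) (hε : 0 < ε) {x y : X} (h : FlowChain φ b ε x y) :
    ∃ (k : ℕ) (p : ℕ → X) (t : ℕ → ℝ), p 0 = x ∧ (∀ i ≤ k, b ≤ t i ∧ t i ≤ 2*b) ∧
      (∀ i < k, dist (φ (t i, p i)) (p (i+1)) < ε) ∧ φ (t k, p k) = y := by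
  obtain ⟨k, p, t, hp0, ht, hj, hend⟩ := h
  subst hp0 hend
  induction k with
  | zero =>
    obtain ⟨k', p', t', h1, h2, h3, h4⟩ := orbit_chain φ h0 hadd hb (p 0) (ht 0 le_rfl)
    exact ⟨k', p', t', h1, h2, fun i hi => by rw [h3 i hi]; simpa using hε, h4⟩
  | succ k IHk =>
    obtain ⟨k₁, p₁, t₁, h1, h2, h3, h4⟩ := IHk (fun i hi => ht i (by omega))
      (fun i hi => hj i (by omega))
    obtain ⟨k₂, p₂, t₂, g1, g2, g3, g4⟩ :=
      orbit_chain φ h0 hadd hb (p (k+1)) (ht (k+1) le_rfl)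
    have hmid : dist (φ (t₁ k₁, p₁ k₁)) (p₂ 0) < ε := by
      rw [h4, g1]; exact hj k (by omega)
    obtain ⟨P, T, c1, c2, c3, c4, c5⟩ := chain_concat φ (fun τ => b ≤ τ ∧ τ ≤ 2*b)
      k₁ k₂ p₁ p₂ t₁ t₂ h2 g2 h3
      (fun i hi => by rw [g3 i hi]; simpa using hε) hmid
    refine ⟨k₁+1+k₂, P, T, by rw [c1, h1], c2, c3, ?_⟩
    rw [c4, c5, g4]

lemma chain_merge (hcont : Continuous φ) (h0 : ∀ p : X, φ (0, p) = p)
    (hadd : ∀ s t : ℝ, ∀ p : X, φ (s, φ (t, p)) = φ (s + t, p))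
    {b L δ : ℝ} (hb : 0 < b) (hb1 : b ≤ 1) (hL : 1 ≤ L) (hδ : 0 < δ) :
    ∃ ε > 0, ∀ x y : X, FlowChain φ b ε x y →
      (∃ (k : ℕ) (p : ℕ → X) (t : ℕ → ℝ), p 0 = x ∧ (∀ i ≤ k, 1 ≤ t i) ∧ t k = L ∧
        (∀ i < k, dist (φ (t i, p i)) (p (i+1)) < δ) ∧ φ (t k, p k) = y)
      ∨ (∃ T : ℝ, b ≤ T ∧ T ≤ 2*L+5 ∧ dist y (φ (T, x)) ≤ δ) := by
  obtain ⟨ηL, hηL, hLmap⟩ := uc_fixed φ hcont (-L) (δ := δ/2) (by linarith)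
  set δR : ℝ := min (δ/4) ηL with hδR
  have hδRpos : 0 < δR := by positivity
  set N : ℕ := ⌈(2*L+5)/b⌉₊ with hN
  obtain ⟨εR, hεR, hR⟩ := chain_error φ hcont hadd (2*L+5) N hδRpos
  set ε : ℝ := min εR (δ/4) with hε
  have hεpos : 0 < ε := by positivity
  refine ⟨ε, hεpos, fun x y hch => ?_⟩
  obtain ⟨k, p, t, hp0, ht, hj, hend⟩ := chain_split φ h0 hadd hb hεpos hch
  -- a step-count bound utility
  have hcount : ∀ (k' : ℕ) (t' : ℕ → ℝ), (∀ i ≤ k', b ≤ t' i) →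
      (∑ i ∈ Finset.range (k'+1), t' i) ≤ 2*L+5 → k' ≤ N := by
    intro k' t' hbt hsum
    have h1 : ((k'+1 : ℕ) : ℝ) * b ≤ ∑ i ∈ Finset.range (k'+1), t' i := by
      have := Finset.card_nsmul_le_sum (Finset.range (k'+1)) t' b
        (fun i hi => hbt i (by simpa [Nat.lt_succ_iff] using hi))
      simpa [nsmul_eq_mul] using this
    have h2 : ((k'+1 : ℕ) : ℝ) ≤ (2*L+5)/b := by
      rw [le_div_iff₀ hb]; linarith
    have h3 : ((k'+1 : ℕ) : ℝ) ≤ (N : ℝ) := le_trans h2 (Nat.le_ceil _)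
    have : k' + 1 ≤ N := by exact_mod_cast h3
    omega
  have key : ∀ (k : ℕ) (p : ℕ → X) (t : ℕ → ℝ),
      (∀ i ≤ k, b ≤ t i ∧ t i ≤ 2*b) →
      (∀ i < k, dist (φ (t i, p i)) (p (i+1)) < ε) →
      ((∃ (k' : ℕ) (p' : ℕ → X) (t' : ℕ → ℝ), p' 0 = p 0 ∧ (∀ i ≤ k', 1 ≤ t' i) ∧
          t' k' = L ∧ (∀ i < k', dist (φ (t' i, p' i)) (p' (i+1)) < δ) ∧
          φ (t' k', p' k') = φ (t k, p k))
        ∨ ((∑ i ∈ Finset.range (k+1), t i) < L + 2 ∧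
            dist (φ (t k, p k)) (φ (∑ i ∈ Finset.range (k+1), t i, p 0)) ≤ δ)) := by
    intro k
    induction k using Nat.strong_induction_on with
    | _ k IHk =>
    intro p t ht hj
    set T : ℝ := ∑ i ∈ Finset.range (k+1), t i with hT
    have htnn : ∀ i ≤ k, 0 ≤ t i := fun i hi => le_trans hb.le (ht i hi).1
    have hjR : ∀ i < k, dist (φ (t i, p i)) (p (i+1)) < εR :=
      fun i hi => lt_of_lt_of_le (hj i hi) (min_le_left _ _)
    rcases lt_or_ge T (L+2) with hshort | hlong
    · -- short chain: orbit approximation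
      right
      refine ⟨hshort, ?_⟩
      have hkN : k ≤ N := hcount k t (fun i hi => (ht i hi).1) (by linarith)
      have := hR k hkN p t htnn (by rw [← hT]; linarith) hjR
      have hle : δR ≤ δ := le_trans (min_le_left _ _) (by linarith)
      rw [← hT] at this
      linarith
    rcases lt_or_ge T (2*L+5) with hmid | hbig
    · -- middle: two-step chain
      left
      have hkN : k ≤ N := hcount k t (fun i hi => (ht i hi).1) (by linarith)
      have hRfull := hR k hkN p t htnn (by rw [← hT]; linarith) hjR
      rw [← hT] at hRfull
      have hRηL : dist (φ (t k, p k)) (φ (T, p 0)) < ηL :=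
        lt_of_lt_of_le hRfull (min_le_right _ _)
      have hclose := hLmap _ _ hRηL
      refine ⟨1, fun i => if i = 0 then p 0 else φ (-L, φ (t k, p k)),
        fun i => if i = 0 then T - L else L, by simp, ?_, by simp, ?_, ?_⟩
      · intro i hi
        interval_cases i
        · norm_num; linarith
        · norm_num [hL]
      · intro i hi
        interval_cases i
        have heq : φ (T - L, p 0) = φ (-L, φ (T, p 0)) := by
          rw [hadd]; congr 1; ring
        norm_num [heq, dist_comm]
        calc dist (φ (-L, φ (t k, p k))) (φ (-L, φ (T, p 0))) < δ/2 := hclose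
        _ < δ := by linarith
      · norm_num
        rw [hadd]
        have : L + -L = 0 := by ring
        rw [this, h0]
    · -- long: peel off the first block and recurse
      left
      have hex : ∃ r, 1 ≤ ∑ i ∈ Finset.range (r+1), t i := ⟨k, by rw [← hT]; linarith⟩
      set j : ℕ := Nat.find hex with hjdef
      have hSj : 1 ≤ ∑ i ∈ Finset.range (j+1), t i := Nat.find_spec hex
      have hjk : j ≤ k := Nat.find_le (by rw [← hT]; linarith)
      have hSj3 : ∑ i ∈ Finset.range (j+1), t i ≤ 3 := by
        rcases Nat.eq_zero_or_pos j with hj0 | hjpos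
        · rw [hj0]
          norm_num
          have := (ht 0 (by omega)).2
          linarith
        · obtain ⟨r, hr⟩ := Nat.exists_eq_succ_of_ne_zero (Nat.pos_iff_ne_zero.mp hjpos)
          have hprev : ¬ (1 ≤ ∑ i ∈ Finset.range (r+1), t i) :=
            Nat.find_min hex (by omega)
          push_neg at hprev
          rw [hr, Finset.sum_range_succ]
          have := (ht (r+1) (by omega)).2
          linarith
      have hjltk : j < k := by
        rcases Nat.lt_or_ge j k with h | h
        · exact h
        · exfalso
          have : j = k := le_antisymm hjk h
          rw [this, ← hT] at hSj3
          linarith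
      -- the tail chain
      set k₂ : ℕ := k - (j+1) with hk₂
      have hk₂k : k₂ < k := by omega
      have hjk1 : (j+1) + k₂ = k := by omega
      set p₂ : ℕ → X := fun i => p ((j+1) + i) with hp₂
      set t₂ : ℕ → ℝ := fun i => t ((j+1) + i) with ht₂
      have htail := IHk k₂ hk₂k p₂ t₂
        (fun i hi => ht ((j+1)+i) (by omega))
        (fun i hi => by
          have := hj ((j+1)+i) (by omega)
          simpa [hp₂, ht₂, Nat.add_assoc] using this)
      have hsplitsum : T = (∑ i ∈ Finset.range (j+1), t i)
          + ∑ i ∈ Finset.range (k₂+1), t₂ i := by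
        rw [hT, ← hjk1]
        have : (j+1) + k₂ + 1 = (j+1) + (k₂+1) := by ring
        rw [this, Finset.sum_range_add]
      have htailend : φ (t₂ k₂, p₂ k₂) = φ (t k, p k) := by
        simp only [hp₂, ht₂, hjk1]
      rcases htail with hgood | hshorttail
      · -- tail gives a good chain; prepend the first block
        obtain ⟨k', p', t', g1, g2, g3, g4, g5⟩ := hgood
        -- jump estimate for the block
        have hjN : j ≤ N := hcount j t (fun i hi => (ht i (by omega)).1) (by linarith)
        have hpre := hR j hjN p t (fun i hi => htnn i (by omega)) (by linarith)
          (fun i hi => hjR i (by omega))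
        have hjump : dist (φ (t j, p j)) (p (j+1)) < ε := hj j hjltk
        have hmid' : dist (φ (∑ i ∈ Finset.range (j+1), t i, p 0)) (p (j+1)) < δ := by
          have htri := dist_triangle (φ (∑ i ∈ Finset.range (j+1), t i, p 0))
            (φ (t j, p j)) (p (j+1))
          rw [dist_comm] at hpre
          have hεle : ε ≤ δ/4 := min_le_right _ _
          have hδRle : δR ≤ δ/4 := min_le_left _ _
          linarith
        have hmid'' : dist (φ (∑ i ∈ Finset.range (j+1), t i, p 0)) (p' 0) < δ := by
          rw [g1]; exact hmid'
        obtain ⟨P, Tm, c1, c2, c3, c4, c5⟩ := chain_concat φ (fun τ => 1 ≤ τ)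
          0 k' (fun _ => p 0) p' (fun _ => ∑ i ∈ Finset.range (j+1), t i) t'
          (fun i _ => hSj) g2 (fun i hi => absurd hi (by omega)) g4 hmid''
        refine ⟨0+1+k', P, Tm, c1, c2, by rw [c4, g3], c3, ?_⟩
        rw [c4, c5, g5, htailend]
      · -- tail short: impossible since the tail still has large total time
        exfalso
        have : ∑ i ∈ Finset.range (k₂+1), t₂ i ≥ L + 2 := by
          have := hsplitsum
          linarith
        linarith [hshorttail.1]
  -- now apply `key` to the split chain
  rcases key k p t ht hj with hgood | hshort
  · left
    obtain ⟨k', p', t', g1, g2, g3, g4, g5⟩ := hgood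
    exact ⟨k', p', t', by rw [g1, hp0], g2, g3, g4, by rw [g5, hend]⟩
  · right
    refine ⟨∑ i ∈ Finset.range (k+1), t i, ?_, by linarith [hshort.1], ?_⟩
    · have h1 : t 0 ≤ ∑ i ∈ Finset.range (k+1), t i :=
        Finset.single_le_sum (f := t) (fun i hi => le_trans hb.le
          (ht i (by simpa [Nat.lt_succ_iff] using hi)).1) (by simp)
      linarith [(ht 0 (by omega)).1]
    · rw [← hp0, ← hend]
      exact hshort.2

lemma lambdaPlus_good_chain (hcont : Continuous φ) (h0 : ∀ p : X, φ (0, p) = p)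
    (hadd : ∀ s t : ℝ, ∀ p : X, φ (s, φ (t, p)) = φ (s + t, p))
    {x y' : X} (hy' : y' ∈ LambdaPlus φ x) {L ε : ℝ} (hL : 1 ≤ L) (hε : 0 < ε) :
    ∃ (k : ℕ) (p : ℕ → X) (t : ℕ → ℝ), p 0 = x ∧ (∀ i ≤ k, 1 ≤ t i) ∧ t k = L ∧
      (∀ i < k, dist (φ (t i, p i)) (p (i+1)) < ε) ∧ φ (t k, p k) = y' := by
  obtain ⟨horb, b', hb', hch⟩ := hy'
  set b₀ : ℝ := min b' 1 with hb₀
  have hb₀pos : 0 < b₀ := lt_min hb' one_pos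
  have hb₀le : b₀ ≤ 1 := min_le_right _ _
  have hch₀ : ∀ η > (0:ℝ), FlowChain φ b₀ η x y' := by
    intro η hη
    obtain ⟨k, p, t, h1, h2, h3, h4⟩ := hch η hη
    exact ⟨k, p, t, h1, fun i hi => le_trans (min_le_left _ _) (h2 i hi), h3, h4⟩
  by_contra hno
  -- then y' is arbitrarily close to the orbit segment, hence on the orbit
  have horbapprox : ∀ m : ℕ, ∃ T : ℝ, T ∈ Set.Icc b₀ (2*L+5) ∧
      dist y' (φ (T, x)) ≤ 1/(m+1) := by
    intro m
    have hδm : (0:ℝ) < min ε (1/(m+1)) := by positivity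
    obtain ⟨εm, hεm, hm⟩ := chain_merge φ hcont h0 hadd hb₀pos hb₀le hL hδm
    rcases hm x y' (hch₀ εm hεm) with hgood | ⟨T, hT1, hT2, hT3⟩
    · exfalso
      obtain ⟨k, p, t, g1, g2, g3, g4, g5⟩ := hgood
      exact hno ⟨k, p, t, g1, g2, g3,
        fun i hi => lt_of_lt_of_le (g4 i hi) (min_le_left _ _), g5⟩
    · exact ⟨T, ⟨hT1, hT2⟩, le_trans hT3 (min_le_right _ _)⟩
  exfalso
  apply horb
  choose T hTmem hTdist using horbapprox
  obtain ⟨Ts, hTsmem, ψ, hψ, hψtendsto⟩ :=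
    (isCompact_Icc (a := b₀) (b := 2*L+5)).tendsto_subseq hTmem
  have hc : Continuous fun r : ℝ => φ (r, x) :=
    hcont.comp (continuous_id.prodMk continuous_const)
  have h1 : Filter.Tendsto (fun n => φ (T (ψ n), x)) Filter.atTop (nhds (φ (Ts, x))) :=
    (hc.continuousAt.tendsto).comp hψtendsto
  have h2 : Filter.Tendsto (fun n => φ (T (ψ n), x)) Filter.atTop (nhds y') := by
    rw [tendsto_iff_dist_tendsto_zero]
    apply squeeze_zero (fun n => dist_nonneg) (g := fun n : ℕ => 1/((n:ℝ)+1))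
    · intro n
      calc dist (φ (T (ψ n), x)) y' = dist y' (φ (T (ψ n), x)) := dist_comm _ _
      _ ≤ 1/((ψ n : ℝ)+1) := hTdist (ψ n)
      _ ≤ 1/((n:ℝ)+1) := by
          apply one_div_le_one_div_of_le (by positivity)
          have := hψ.le_apply (x := n)
          push_cast
          linarith [(Nat.cast_le (α := ℝ)).mpr this]
    · exact tendsto_one_div_add_atTop_nhds_zero_nat
  exact ⟨Ts, tendsto_nhds_unique h2 h1⟩

lemma closure_chain (hcont : Continuous φ) (h0 : ∀ p : X, φ (0, p) = p)
    (hadd : ∀ s t : ℝ, ∀ p : X, φ (s, φ (t, p)) = φ (s + t, p))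
    {x y : X} (hy : y ∈ closure (LambdaPlus φ x)) (c : ℝ) {ε : ℝ} (hε : 0 < ε) :
    FlowChain φ (1/2) ε x (φ (c, y)) := by
  set β : ℝ := max 0 (-c) + 1/2 with hβ
  have hβpos : 0 < β := by positivity
  set L : ℝ := β + 1 with hLdef
  have hL : 1 ≤ L := by rw [hLdef]; linarith
  obtain ⟨δ₂, hδ₂, hmapβ⟩ := uc_fixed φ hcont (-β) (δ := ε/2) (by linarith)
  obtain ⟨y', hy'mem, hy'dist⟩ := Metric.mem_closure_iff.mp hy δ₂ hδ₂
  obtain ⟨k, p, t, g1, g2, g3, g4, g5⟩ :=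
    lambdaPlus_good_chain φ hcont h0 hadd hy'mem hL (half_pos hε)
  -- modify the last step and append one more step
  refine ⟨k+1, fun i => if i ≤ k then p i else φ (-β, y),
    fun i => if i < k then t i else if i = k then L - β else β + c, ?_, ?_, ?_, ?_⟩
  · simp [g1]
  · intro i hi
    by_cases h1 : i < k
    · have := g2 i h1.le
      simp only [h1, if_pos]
      linarith
    · by_cases h2 : i = k
      · simp only [h1, if_neg, h2, if_pos]
        rw [hLdef]; norm_num
      · simp only [h1, h2, if_neg, if_false]
        rw [hβ]
        have : max 0 (-c) + c ≥ 0 := by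
          rcases le_total 0 (-c) with h | h
          · rw [max_eq_right h]; linarith
          · rw [max_eq_left h]; linarith
        linarith
  · intro i hi
    by_cases h1 : i < k
    · -- old jumps
      have h2 : i ≤ k := h1.le
      have h3 : i + 1 ≤ k := h1
      have := g4 i h1
      simp only [h1, if_pos, h2, h3]
      linarith
    · -- i = k : the new jump
      have h2 : i = k := by omega
      subst h2
      have h3 : ¬ (i + 1 ≤ i) := by omega
      norm_num
      have heq : φ (L - β, p i) = φ (-β, y') := by
        rw [← g5, ← g3, hadd]
        congr 1
        ring
      rw [heq]
      have := hmapβ y' y (by rwa [dist_comm])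
      linarith
  · have h1 : ¬ (k + 1 < k) := by omega
    have h2 : ¬ (k + 1 ≤ k) := by omega
    have h3 : ¬ (k + 1 = k) := by omega
    simp only [h1, h2, h3, if_false]
    rw [hadd]
    congr 1
    ring

end FlowChainAux

/-- **Claim (3) in the proof of Theorem A.**
For a continuous flow `φ` on a compact metric space `X` and a point `x` that is not
chain recurrent, the set `Λ₊(x)` is closed. -/
theorem lambdaPlus_isClosed {X : Type*} [MetricSpace X] [CompactSpace X]
    (φ : ℝ × X → X) (hcont : Continuous φ)
    (h0 : ∀ p : X, φ (0, p) = p)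
    (hadd : ∀ s t : ℝ, ∀ p : X, φ (s, φ (t, p)) = φ (s + t, p))
    (x : X) (hx : ¬ FlowChainRecurrent φ x) :
    IsClosed (LambdaPlus φ x) := by
  apply isClosed_of_closure_subset
  intro y hy
  refine ⟨?_, 1/2, by norm_num, fun ε hε => ?_⟩
  · rintro ⟨s, hs⟩
    apply hx
    refine ⟨1/2, by norm_num, fun ε hε => ?_⟩
    have := closure_chain φ hcont h0 hadd hy (-s) hε
    have hxy : φ (-s, y) = x := by
      rw [hs, hadd]
      have : -s + s = 0 := by ring
      rw [this, h0]
    rwa [hxy] at this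
  · have := closure_chain φ hcont h0 hadd hy 0 hε
    rwa [h0] at this
end

section
/- Let X be a compact metric space, φ a continuous flow on X, x ∈ X, and fix b > 0 and T > 0. Suppose (ε_n) is a sequence of positive reals tending to 0, and for each n there is a (b, ε_n)-chain from x to a point y_n whose total time (the sum of the times of its segments) is at most T. If y_n converges to y, then y = φ(s, x) for some s ∈ [0, T]. (The bounded-length pseudo-orbit limit argument used in Claims (2) and (3) of the proof of Theorem A: chains of bounded total length force the endpoint onto the orbit of x.) -/
open Filter

/-- **Bounded-length pseudo-orbit limits (used in Claims (2), (3) of Theorem A).**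
Let `X` be a compact metric space, `φ` a continuous flow on `X`, `x ∈ X`, `b > 0`,
`T > 0`.  If `ε_n → 0` with `ε_n > 0` and for each `n` there is a `(b, ε_n)`-chain from
`x` to `y_n` whose total time is at most `T`, and `y_n → y`, then `y = φ(s, x)` for some
`s ∈ [0, T]`. -/
theorem bounded_chain_limit_on_orbit {X : Type*} [MetricSpace X] [CompactSpace X]
    (φ : ℝ × X → X) (hcont : Continuous φ)
    (h0 : ∀ p : X, φ (0, p) = p)
    (hadd : ∀ s t : ℝ, ∀ p : X, φ (s, φ (t, p)) = φ (s + t, p))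
    (x : X) (b T : ℝ) (hb : 0 < b) (hT : 0 < T)
    (ε : ℕ → ℝ) (hε : ∀ n, 0 < ε n) (hε0 : Tendsto ε atTop (nhds 0))
    (ySeq : ℕ → X) (y : X) (hy : Tendsto ySeq atTop (nhds y))
    (hchain : ∀ n : ℕ, ∃ (k : ℕ) (p : ℕ → X) (t : ℕ → ℝ),
      p 0 = x ∧ (∀ i ≤ k, b ≤ t i) ∧
      (∀ i < k, dist (φ (t i, p i)) (p (i + 1)) < ε n) ∧
      φ (t k, p k) = ySeq n ∧
      (∑ i ∈ Finset.range (k + 1), t i) ≤ T) :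
    ∃ s : ℝ, 0 ≤ s ∧ s ≤ T ∧ y = φ (s, x) := by
  classical
  choose k p t hp0 hbt hdist hend hsum using hchain
  -- each individual time is at most T
  have htleT : ∀ n, ∀ i ≤ k n, t n i ≤ T := by
    intro n i hi
    have h1 : t n i ≤ ∑ j ∈ Finset.range (k n + 1), t n j := by
      apply Finset.single_le_sum (f := t n)
      · intro j hj
        exact le_trans hb.le (hbt n j (Nat.lt_succ_iff.mp (Finset.mem_range.mp hj)))
      · exact Finset.mem_range.mpr (Nat.lt_succ_of_le hi)
    exact h1.trans (hsum n)
  have hbT : b ≤ T := (hbt 0 0 (Nat.zero_le _)).trans (htleT 0 0 (Nat.zero_le _))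
  -- k is bounded
  have hkB : ∀ n, k n ≤ Nat.floor (T / b) := by
    intro n
    rw [Nat.le_floor_iff (by positivity), le_div_iff₀ hb]
    have h1 : ((k n : ℝ) + 1) * b ≤ ∑ j ∈ Finset.range (k n + 1), t n j := by
      have h2 := Finset.sum_le_sum (f := fun _ => b) (g := t n) (s := Finset.range (k n + 1))
        (fun j hj => hbt n j (Nat.lt_succ_iff.mp (Finset.mem_range.mp hj)))
      simpa [Finset.sum_const, Finset.card_range, Nat.cast_add] using h2
    nlinarith [hsum n]
  -- pigeonhole: some k₀ occurs infinitely often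
  obtain ⟨k₀, hk₀⟩ : ∃ k₀, ∃ᶠ n in atTop, k n = k₀ := by
    by_contra h
    push_neg at h
    have hev : ∀ᶠ n in atTop, ∀ j ∈ Finset.range (Nat.floor (T / b) + 1), k n ≠ j := by
      rw [Filter.eventually_all_finset]
      intro j _
      exact h j
    obtain ⟨n, hn⟩ := hev.exists
    exact hn (k n) (Finset.mem_range.mpr (Nat.lt_succ_of_le (hkB n))) rfl
  obtain ⟨ψ, hψmono, hψk⟩ := Filter.extraction_of_frequently_atTop hk₀
  -- gather the chain data into a compact product space
  set u : ℕ → (ℕ → X) × (ℕ → ℝ) :=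
    fun m => (p (ψ m), fun i => if i ≤ k₀ then t (ψ m) i else b) with hu_def
  have hS : IsCompact ((Set.univ : Set (ℕ → X)) ×ˢ Set.univ.pi fun _ : ℕ => Set.Icc b T) :=
    isCompact_univ.prod (isCompact_univ_pi fun _ => isCompact_Icc)
  have humem : ∀ m, u m ∈ ((Set.univ : Set (ℕ → X)) ×ˢ Set.univ.pi fun _ : ℕ => Set.Icc b T) := by
    intro m
    refine ⟨Set.mem_univ _, fun i _ => ?_⟩
    simp only [hu_def]
    split_ifs with hi
    · exact ⟨hbt (ψ m) i (by rw [hψk m]; exact hi),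
        htleT (ψ m) i (by rw [hψk m]; exact hi)⟩
    · exact ⟨le_rfl, hbT⟩
  obtain ⟨⟨P, τ⟩, hmem, σ, hσmono, hconv⟩ := hS.tendsto_subseq humem
  have hψσ : StrictMono (fun m => ψ (σ m)) := hψmono.comp hσmono
  have hPlim : ∀ i, Tendsto (fun m => p (ψ (σ m)) i) atTop (nhds (P i)) := by
    intro i
    have h1 : Tendsto (fun m => (u (σ m)).1) atTop (nhds P) :=
      (continuous_fst.tendsto _).comp hconv
    exact tendsto_pi_nhds.mp h1 i
  have hτlim : ∀ i ≤ k₀, Tendsto (fun m => t (ψ (σ m)) i) atTop (nhds (τ i)) := by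
    intro i hi
    have h1 : Tendsto (fun m => (u (σ m)).2) atTop (nhds τ) :=
      (continuous_snd.tendsto _).comp hconv
    have h2 := tendsto_pi_nhds.mp h1 i
    simpa only [hu_def, if_pos hi] using h2
  have hεlim : Tendsto (fun m => ε (ψ (σ m))) atTop (nhds 0) :=
    hε0.comp hψσ.tendsto_atTop
  have hP0 : P 0 = x := by
    have h2 : Tendsto (fun m => p (ψ (σ m)) 0) atTop (nhds x) := by
      simp only [hp0]; exact tendsto_const_nhds
    exact tendsto_nhds_unique (hPlim 0) h2
  have hstep : ∀ i < k₀, φ (τ i, P i) = P (i + 1) := by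
    intro i hi
    have hd : Tendsto
        (fun m => dist (φ (t (ψ (σ m)) i, p (ψ (σ m)) i)) (p (ψ (σ m)) (i + 1))) atTop
        (nhds (dist (φ (τ i, P i)) (P (i + 1)))) := by
      have h1 : Tendsto (fun m => φ (t (ψ (σ m)) i, p (ψ (σ m)) i)) atTop
          (nhds (φ (τ i, P i))) :=
        (hcont.tendsto _).comp ((hτlim i hi.le).prodMk_nhds (hPlim i))
      exact h1.dist (hPlim (i + 1))
    have hd0 : Tendsto
        (fun m => dist (φ (t (ψ (σ m)) i, p (ψ (σ m)) i)) (p (ψ (σ m)) (i + 1))) atTop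
        (nhds 0) := by
      apply squeeze_zero (fun m => dist_nonneg) (fun m => ?_) hεlim
      exact (hdist (ψ (σ m)) i (by rw [hψk (σ m)]; exact hi)).le
    exact dist_eq_zero.mp (tendsto_nhds_unique hd hd0)
  have hendlim : φ (τ k₀, P k₀) = y := by
    have h1 : Tendsto (fun m => φ (t (ψ (σ m)) k₀, p (ψ (σ m)) k₀)) atTop
        (nhds (φ (τ k₀, P k₀))) :=
      (hcont.tendsto _).comp ((hτlim k₀ le_rfl).prodMk_nhds (hPlim k₀))
    have h3 : ∀ m, φ (t (ψ (σ m)) k₀, p (ψ (σ m)) k₀) = ySeq (ψ (σ m)) := by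
      intro m
      have h5 := hend (ψ (σ m))
      rw [hψk (σ m)] at h5
      exact h5
    have h4 : Tendsto (fun m => ySeq (ψ (σ m))) atTop (nhds y) :=
      hy.comp hψσ.tendsto_atTop
    have h2 : Tendsto (fun m => φ (t (ψ (σ m)) k₀, p (ψ (σ m)) k₀)) atTop (nhds y) := by
      simp only [h3]; exact h4
    exact tendsto_nhds_unique h1 h2
  have hτb : ∀ i, b ≤ τ i := fun i => (hmem.2 i (Set.mem_univ i)).1
  have hsumτ : ∑ i ∈ Finset.range (k₀ + 1), τ i ≤ T := by
    have h1 : Tendsto (fun m => ∑ i ∈ Finset.range (k₀ + 1), t (ψ (σ m)) i) atTop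
        (nhds (∑ i ∈ Finset.range (k₀ + 1), τ i)) :=
      tendsto_finset_sum _ (fun i hi => hτlim i (Nat.lt_succ_iff.mp (Finset.mem_range.mp hi)))
    refine le_of_tendsto h1 (Filter.Eventually.of_forall fun m => ?_)
    have h2 := hsum (ψ (σ m))
    rwa [hψk (σ m)] at h2
  have horb : ∀ j, j ≤ k₀ → P j = φ (∑ i ∈ Finset.range j, τ i, x) := by
    intro j
    induction j with
    | zero => intro _; simp [hP0, h0]
    | succ j ih =>
      intro hj
      have hjk : j < k₀ := Nat.lt_of_succ_le hj
      rw [← hstep j hjk, ih hjk.le, hadd, Finset.sum_range_succ, add_comm]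
  refine ⟨∑ i ∈ Finset.range (k₀ + 1), τ i, ?_, hsumτ, ?_⟩
  · exact Finset.sum_nonneg fun i _ => le_trans hb.le (hτb i)
  · rw [← hendlim, horb k₀ le_rfl, hadd, Finset.sum_range_succ, add_comm]
end
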